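/- arXiv:2412.12387 — 6 statements merged into one kernel-verified Lean document; each statement's English description precedes it below -/
import Mathlib

section
/- Conversion from RDP to (ε,δ)-DP: if for probability distributions P, Q on a finite set we have D_α(P‖Q) ≤ ε for some α > 1, then for any δ ∈ (0,1) and any event S, Pr_P[S] ≤ e^{ε + log(1/δ)/(α−1)} · Pr_Q[S] + δ. -/
open Real Finset

/-- Rényi divergence of order `α`. -/
noncomputable def renyiDiv {X : Type*} [Fintype X] (α : ℝ) (P Q : X → ℝ) : ℝ :=
  (α - 1)⁻¹ * Real.log (∑ x, P x ^ α * Q x ^ (1 - α))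

theorem rdp_to_approx_dp {X : Type*} [Fintype X]
    (P Q : X → ℝ) (α ε δ : ℝ) (hα : 1 < α)
    (hP0 : ∀ x, 0 ≤ P x) (hP1 : ∑ x, P x = 1)
    (hQ0 : ∀ x, 0 < Q x) (hQ1 : ∑ x, Q x = 1)
    (hRDP : renyiDiv α P Q ≤ ε)
    (hδ0 : 0 < δ) (hδ1 : δ < 1) (S : Finset X) :
    ∑ x ∈ S, P x ≤ Real.exp (ε + Real.log (1 / δ) / (α - 1)) * ∑ x ∈ S, Q x + δ := by
  have hα1 : (0:ℝ) < α - 1 := by linarith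
  set E : ℝ := ε + Real.log (1 / δ) / (α - 1) with hE
  set c : ℝ := Real.exp E with hc
  have hc0 : 0 < c := Real.exp_pos _
  -- positivity of the Rényi sum
  have hterm : ∀ x, 0 ≤ P x ^ α * Q x ^ (1 - α) := fun x =>
    mul_nonneg (Real.rpow_nonneg (hP0 x) _) (Real.rpow_nonneg (hQ0 x).le _)
  have hsum_pos : 0 < ∑ x, P x ^ α * Q x ^ (1 - α) := by
    obtain ⟨x, hx⟩ : ∃ x, P x ≠ 0 := by
      by_contra h
      push_neg at h
      simp [h] at hP1
    have hPx : 0 < P x := lt_of_le_of_ne (hP0 x) (Ne.symm hx)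
    refine Finset.sum_pos' (fun y _ => hterm y) ⟨x, Finset.mem_univ x, ?_⟩
    exact mul_pos (Real.rpow_pos_of_pos hPx _) (Real.rpow_pos_of_pos (hQ0 x) _)
  have hsum_le : (∑ x, P x ^ α * Q x ^ (1 - α)) ≤ Real.exp ((α - 1) * ε) := by
    have h1 : Real.log (∑ x, P x ^ α * Q x ^ (1 - α)) ≤ (α - 1) * ε := by
      have := hRDP
      rw [renyiDiv] at this
      calc Real.log (∑ x, P x ^ α * Q x ^ (1 - α))
          = (α - 1) * ((α - 1)⁻¹ * Real.log (∑ x, P x ^ α * Q x ^ (1 - α))) := by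
            field_simp
        _ ≤ (α - 1) * ε := by
            exact mul_le_mul_of_nonneg_left this hα1.le
    calc (∑ x, P x ^ α * Q x ^ (1 - α)) = Real.exp (Real.log (∑ x, P x ^ α * Q x ^ (1 - α))) :=
          (Real.exp_log hsum_pos).symm
      _ ≤ Real.exp ((α - 1) * ε) := Real.exp_le_exp.mpr h1
  -- split S into good and bad parts
  have hsplit : ∑ x ∈ S, P x
      = ∑ x ∈ S.filter (fun x => P x ≤ c * Q x), P x
        + ∑ x ∈ S.filter (fun x => ¬ P x ≤ c * Q x), P x :=
    (Finset.sum_filter_add_sum_filter_not S _ P).symm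
  have hgood : ∑ x ∈ S.filter (fun x => P x ≤ c * Q x), P x ≤ c * ∑ x ∈ S, Q x := by
    calc ∑ x ∈ S.filter (fun x => P x ≤ c * Q x), P x
        ≤ ∑ x ∈ S.filter (fun x => P x ≤ c * Q x), c * Q x :=
          Finset.sum_le_sum (fun x hx => (Finset.mem_filter.mp hx).2)
      _ = c * ∑ x ∈ S.filter (fun x => P x ≤ c * Q x), Q x := by rw [Finset.mul_sum]
      _ ≤ c * ∑ x ∈ S, Q x := by
          apply mul_le_mul_of_nonneg_left _ hc0.le
          exact Finset.sum_le_sum_of_subset_of_nonneg (Finset.filter_subset _ _)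
            (fun x _ _ => (hQ0 x).le)
  have hbad : ∑ x ∈ S.filter (fun x => ¬ P x ≤ c * Q x), P x ≤ δ := by
    have hpt : ∀ x ∈ S.filter (fun x => ¬ P x ≤ c * Q x),
        P x ≤ c ^ (1 - α) * (P x ^ α * Q x ^ (1 - α)) := by
      intro x hx
      have hlt : c * Q x < P x := not_le.mp (Finset.mem_filter.mp hx).2
      have hPx : 0 < P x := lt_trans (mul_pos hc0 (hQ0 x)) hlt
      have hQlt : Q x ≤ P x / c := by
        rw [le_div_iff₀ hc0]; linarith [mul_comm c (Q x)]
      have h1 : (P x / c) ^ (1 - α) ≤ Q x ^ (1 - α) :=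
        Real.rpow_le_rpow_of_nonpos (hQ0 x) hQlt (by linarith)
      have h2 : P x * c ^ (α - 1) ≤ P x ^ α * Q x ^ (1 - α) := by
        have hpow : P x ^ α * P x ^ (1 - α) = P x := by
          rw [← Real.rpow_add hPx]; norm_num
        have hcin : c ^ (α - 1) = (c ^ (1 - α))⁻¹ := by
          rw [← Real.rpow_neg hc0.le]; congr 1; ring
        calc P x * c ^ (α - 1) = P x ^ α * (P x / c) ^ (1 - α) := by
              rw [Real.div_rpow hPx.le hc0.le, hcin, div_eq_mul_inv,
                ← mul_assoc, hpow]
            _ ≤ P x ^ α * Q x ^ (1 - α) :=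
              mul_le_mul_of_nonneg_left h1 (Real.rpow_nonneg hPx.le _)
      have h3 : c ^ (1 - α) * (P x * c ^ (α - 1)) ≤ c ^ (1 - α) * (P x ^ α * Q x ^ (1 - α)) :=
        mul_le_mul_of_nonneg_left h2 (Real.rpow_nonneg hc0.le _)
      have h4 : c ^ (1 - α) * c ^ (α - 1) = 1 := by
        rw [← Real.rpow_add hc0]; norm_num
      calc P x = c ^ (1 - α) * (P x * c ^ (α - 1)) := by
            rw [mul_comm (P x), ← mul_assoc, h4, one_mul]
        _ ≤ _ := h3
    calc ∑ x ∈ S.filter (fun x => ¬ P x ≤ c * Q x), P x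
        ≤ ∑ x ∈ S.filter (fun x => ¬ P x ≤ c * Q x), c ^ (1 - α) * (P x ^ α * Q x ^ (1 - α)) :=
          Finset.sum_le_sum hpt
      _ = c ^ (1 - α) * ∑ x ∈ S.filter (fun x => ¬ P x ≤ c * Q x), P x ^ α * Q x ^ (1 - α) := by
          rw [Finset.mul_sum]
      _ ≤ c ^ (1 - α) * ∑ x, P x ^ α * Q x ^ (1 - α) := by
          apply mul_le_mul_of_nonneg_left _ (Real.rpow_nonneg hc0.le _)
          exact Finset.sum_le_sum_of_subset_of_nonneg (Finset.subset_univ _)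
            (fun x _ _ => hterm x)
      _ ≤ c ^ (1 - α) * Real.exp ((α - 1) * ε) :=
          mul_le_mul_of_nonneg_left hsum_le (Real.rpow_nonneg hc0.le _)
      _ = δ := by
          rw [hc, ← Real.exp_mul, ← Real.exp_add]
          have key : E * (1 - α) + (α - 1) * ε = -Real.log (1 / δ) := by
            rw [hE]; field_simp; ring
          rw [key, one_div, Real.log_inv, neg_neg, Real.exp_log hδ0]
  rw [hsplit]
  exact add_le_add hgood hbad
end

section
/- Tight ε-DP to RDP bound, monotone form: define ε̂(α) = (1/(α−1)) · log( e^{αε}/(e^ε+1) + e^ε·e^{−αε}/(e^ε+1) ) for α > 1 and ε ≥ 0. Then ε̂(α) = ε − (1/(α−1))·log( (1+e^{−ε})/(1+e^{−(2α−1)ε}) ), and 0 ≤ ε̂(α) ≤ ε. -/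
/-!
With `x = e^ε` and `y = e^{αε}`, the argument of the logarithm is `(y + x / y) / (x + 1)`, which
equals `e^{(α-1)ε} (1 + e^{-(2α-1)ε}) / (1 + e^{-ε})`; taking logarithms gives the identity.
The two bounds say that both `(y + x / y) / (x + 1)` and `(1 + e^{-ε}) / (1 + e^{-(2α-1)ε})`
are at least `1`. The second is monotonicity of `exp`; the first follows from the factorisation
`y + x / y - x - 1 = (y / x - 1) (x - x / y)`, whose factors are nonnegative when `ε ≥ 0`, `α ≥ 1`.
-/

open Real

/-- The Rényi moment `∑ Q (P / Q)^α` of the randomized-response pair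
`P = (e^ε, 1) / (e^ε + 1)`, `Q = (1, e^ε) / (e^ε + 1)`. -/
noncomputable def randResponseMoment (ε α : ℝ) : ℝ :=
  exp (α * ε) / (exp ε + 1) + exp ε * exp (-α * ε) / (exp ε + 1)

theorem randResponseMoment_eq (ε α : ℝ) :
    randResponseMoment ε α =
      exp ((α - 1) * ε) / ((1 + exp (-ε)) / (1 + exp (-(2 * α - 1) * ε))) := by
  have h₁ : exp ((α - 1) * ε) = exp (α * ε) / exp ε := by rw [← exp_sub]; ring_nf
  have h₂ : exp (-(2 * α - 1) * ε) = exp ε / exp (α * ε) ^ 2 := by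
    rw [← exp_nat_mul, ← exp_sub]; ring_nf
  rw [randResponseMoment, h₁, h₂, neg_mul, exp_neg, exp_neg]
  field_simp

theorem one_le_randResponseMoment {ε α : ℝ} (hε : 0 ≤ ε) (hα : 1 ≤ α) :
    1 ≤ randResponseMoment ε α := by
  set x := exp ε
  set y := exp (α * ε)
  have hx : 1 ≤ x := one_le_exp hε
  have hxy : x ≤ y := exp_le_exp.2 (by nlinarith)
  have hy : 0 < y := exp_pos _
  have factor : y + x / y - x - 1 = (y / x - 1) * (x - x / y) := by field_simp; ring
  have hfactor : 0 ≤ (y / x - 1) * (x - x / y) := by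
    apply mul_nonneg
    · rw [sub_nonneg, one_le_div (by positivity)]; exact hxy
    · rw [sub_nonneg, div_le_iff₀ hy]; nlinarith
  rw [randResponseMoment, neg_mul, exp_neg, ← add_div, one_le_div (by positivity),
    ← div_eq_mul_inv]
  linarith

theorem one_le_one_add_exp_neg_div {ε α : ℝ} (hε : 0 ≤ ε) (hα : 1 ≤ α) :
    1 ≤ (1 + exp (-ε)) / (1 + exp (-(2 * α - 1) * ε)) := by
  rw [one_le_div (by positivity)]
  gcongr
  nlinarith

theorem log_randResponseMoment (ε α : ℝ) :
    log (randResponseMoment ε α) =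
      (α - 1) * ε - log ((1 + exp (-ε)) / (1 + exp (-(2 * α - 1) * ε))) := by
  rw [randResponseMoment_eq, log_div (exp_pos _).ne' (div_pos (by positivity) (by positivity)).ne',
    log_exp]

theorem tight_dp_to_rdp (ε α : ℝ) (hε : 0 ≤ ε) (hα : 1 < α) :
    (α - 1)⁻¹ * Real.log (Real.exp (α * ε) / (Real.exp ε + 1) +
        Real.exp ε * Real.exp (-α * ε) / (Real.exp ε + 1))
      = ε - (α - 1)⁻¹ * Real.log ((1 + Real.exp (-ε)) / (1 + Real.exp (-(2 * α - 1) * ε))) ∧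
    0 ≤ (α - 1)⁻¹ * Real.log (Real.exp (α * ε) / (Real.exp ε + 1) +
        Real.exp ε * Real.exp (-α * ε) / (Real.exp ε + 1)) ∧
    (α - 1)⁻¹ * Real.log (Real.exp (α * ε) / (Real.exp ε + 1) +
        Real.exp ε * Real.exp (-α * ε) / (Real.exp ε + 1)) ≤ ε := by
  rw [← randResponseMoment]
  have hα₀ : 0 < α - 1 := sub_pos.2 hα
  have hmoment := log_nonneg (one_le_randResponseMoment hε hα.le)
  have hratio := log_nonneg (one_le_one_add_exp_neg_div hε hα.le)
  refine ⟨?_, by positivity, ?_⟩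
  · rw [log_randResponseMoment]
    field_simp
  · rw [log_randResponseMoment, mul_sub, inv_mul_cancel_left₀ hα₀.ne']
    linarith [mul_nonneg (inv_nonneg.2 hα₀.le) hratio]
end

section
/- The function ε̂(α) = ε − (1/(α−1))·log( (1+e^{−ε})/(1+e^{−(2α−1)ε}) ) is monotone nondecreasing in ε ∈ [0,∞) for each fixed α > 1. -/
open Real

private lemma log_one_add_exp_deriv (c x : ℝ) :
    HasDerivAt (fun ε : ℝ => Real.log (1 + Real.exp (c * ε)))
      (c * Real.exp (c * x) / (1 + Real.exp (c * x))) x := by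
  have h1 : HasDerivAt (fun ε : ℝ => c * ε) c x := by
    simpa using (hasDerivAt_id x).const_mul c
  have h2 : HasDerivAt (fun ε : ℝ => Real.exp (c * ε)) (Real.exp (c * x) * c) x := h1.exp
  have h3 : HasDerivAt (fun ε : ℝ => 1 + Real.exp (c * ε)) (Real.exp (c * x) * c) x :=
    h2.const_add 1
  have hne : (1 : ℝ) + Real.exp (c * x) ≠ 0 := by positivity
  have := h3.log hne
  convert this using 1
  ring

theorem tight_rdp_budget_monotone_in_eps (α : ℝ) (hα : 1 < α) :
    MonotoneOn
      (fun ε : ℝ =>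
        ε - (α - 1)⁻¹ * Real.log ((1 + Real.exp (-ε)) / (1 + Real.exp (-(2 * α - 1) * ε))))
      (Set.Ici (0 : ℝ)) := by
  have hc : (0 : ℝ) < (α - 1)⁻¹ := inv_pos.mpr (by linarith)
  have hfun : (fun ε : ℝ =>
        ε - (α - 1)⁻¹ * Real.log ((1 + Real.exp (-ε)) / (1 + Real.exp (-(2 * α - 1) * ε))))
      = (fun ε : ℝ =>
        ε - (α - 1)⁻¹ * (Real.log (1 + Real.exp ((-1) * ε))
          - Real.log (1 + Real.exp ((-(2 * α - 1)) * ε)))) := by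
    funext ε
    have h1 : (1 : ℝ) + Real.exp (-ε) ≠ 0 := by positivity
    have h2 : (1 : ℝ) + Real.exp (-(2 * α - 1) * ε) ≠ 0 := by positivity
    rw [Real.log_div h1 h2]
    norm_num
  rw [hfun]
  have hderiv : ∀ x : ℝ,
      HasDerivAt (fun ε : ℝ =>
        ε - (α - 1)⁻¹ * (Real.log (1 + Real.exp ((-1) * ε))
          - Real.log (1 + Real.exp ((-(2 * α - 1)) * ε))))
      (1 - (α - 1)⁻¹ * ((-1) * Real.exp ((-1) * x) / (1 + Real.exp ((-1) * x))
          - (-(2 * α - 1)) * Real.exp ((-(2 * α - 1)) * x) / (1 + Real.exp ((-(2 * α - 1)) * x))))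
      x := by
    intro x
    exact (hasDerivAt_id x).sub
      (((log_one_add_exp_deriv (-1) x).sub (log_one_add_exp_deriv (-(2 * α - 1)) x)).const_mul _)
  apply monotoneOn_of_deriv_nonneg (convex_Ici 0)
  · exact fun x _ => ((hderiv x).differentiableAt).continuousAt.continuousWithinAt
  · intro x hx
    exact ((hderiv x).differentiableAt).differentiableWithinAt
  · intro x hx
    rw [interior_Ici] at hx
    have hx0 : (0 : ℝ) ≤ x := le_of_lt hx
    rw [(hderiv x).deriv]
    have hu0 : 0 < Real.exp ((-1) * x) := Real.exp_pos _
    have hv0 : 0 < Real.exp ((-(2 * α - 1)) * x) := Real.exp_pos _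
    have hu1 : Real.exp ((-1) * x) ≤ 1 := by
      rw [Real.exp_le_one_iff]; linarith
    have huv : Real.exp ((-(2 * α - 1)) * x) ≤ Real.exp ((-1) * x) := by
      apply Real.exp_le_exp.mpr
      nlinarith
    generalize Real.exp ((-(2 * α - 1)) * x) = v at hv0 huv ⊢
    generalize Real.exp ((-1) * x) = u at hu0 hu1 huv ⊢
    have h1 : (0 : ℝ) < 1 + u := by linarith
    have h2 : (0 : ℝ) < 1 + v := by linarith
    have expand : 1 - (α - 1)⁻¹ * ((-1) * u / (1 + u) - (-(2 * α - 1)) * v / (1 + v))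
        = (α - 1)⁻¹ * (((α - 1) + u / (1 + u)) - (2 * α - 1) * (v / (1 + v))) := by
      have hne : α - 1 ≠ 0 := by linarith
      field_simp
      ring
    rw [expand]
    apply mul_nonneg (le_of_lt hc)
    have hA2 : u / (1 + u) ≤ 1 / 2 := by
      rw [div_le_div_iff₀ h1 (by norm_num)]
      linarith
    have hBA : v / (1 + v) ≤ u / (1 + u) := by
      rw [div_le_div_iff₀ h2 h1]
      nlinarith
    have hB0 : 0 ≤ v / (1 + v) := by positivity
    nlinarith [mul_nonneg (le_of_lt (show (0:ℝ) < α - 1 by linarith))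
      (show 0 ≤ 1 - 2 * (u / (1 + u)) by linarith)]
end

section
/- For the depolarizing channel E(ρ) = (p/2)I + (1−p)ρ on single-qubit density matrices, every entry of E(ρ) is within a multiplicative factor bounded by the corresponding QDP guarantee on measurement probabilities: for any PSD matrix M with 0 ≤ M ≤ I and any two density matrices ρ, σ with ½‖ρ−σ‖₁ ≤ d, Tr(M·E(ρ)) ≤ (1 + ((1−p)/p)·2d)·Tr(M·E(σ)). -/
/-! For a traceless Hermitian 2×2 matrix `Δ = ρ - σ`, Cayley–Hamilton gives `Δ * Δ = c • 1`, so
the eigenvalues of `Δ` are `±√c`, `‖Δ‖₁ = 2√c` and `Δ ≤ √c • 1`. Hence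
`Tr(MΔ) ≤ ½‖Δ‖₁ · Tr M ≤ d · Tr M` for every `M ≥ 0`. As `Tr(M E(τ)) = (p/2) Tr M + (1-p) Tr(Mτ)`,
the probability under `E(ρ)` exceeds the one under `E(σ)` by at most `(1-p) d Tr M`, and this is
at most `(2(1-p)d/p) · Tr(M E(σ))` because `(p/2) Tr M ≤ Tr(M E(σ))`. -/

open Matrix
open scoped ComplexOrder

/-- Trace norm (sum of singular values) of a 2×2 complex matrix. -/
noncomputable def traceNorm (A : Matrix (Fin 2) (Fin 2) ℂ) : ℝ :=
  ∑ i, Real.sqrt ((Matrix.isHermitian_conjTranspose_mul_self A).eigenvalues i)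

/-- The depolarizing channel on 2×2 matrices (acting on trace-one states,
`E(ρ) = (p/2)·I + (1−p)·ρ`). -/
noncomputable def depolarize (p : ℝ) (ρ : Matrix (Fin 2) (Fin 2) ℂ) :
    Matrix (Fin 2) (Fin 2) ℂ :=
  ((p : ℂ) / 2) • (1 : Matrix (Fin 2) (Fin 2) ℂ) + ((1 : ℂ) - (p : ℂ)) • ρ

namespace Matrix

variable {𝕜 n : Type*} [RCLike 𝕜] [Fintype n] [DecidableEq n]

theorem PosSemidef.trace_mul_nonneg {A B : Matrix n n 𝕜} (hA : A.PosSemidef) (hB : B.PosSemidef) :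
    0 ≤ (A * B).trace := by
  open scoped MatrixOrder in
  obtain ⟨X, rfl⟩ := CStarAlgebra.nonneg_iff_eq_star_mul_self.mp hA.nonneg
  rw [Matrix.mul_assoc, trace_mul_comm]
  exact (hB.mul_mul_conjTranspose_same X).trace_nonneg

theorem PosSemidef.re_trace_mul_le_of_posSemidef_smul_one_sub {M A : Matrix n n 𝕜} {r : ℝ}
    (hM : M.PosSemidef) (hA : (r • 1 - A).PosSemidef) :
    RCLike.re (M * A).trace ≤ r * RCLike.re M.trace := by
  have := RCLike.nonneg_iff.mp (hM.trace_mul_nonneg hA) |>.1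
  simpa [Matrix.mul_sub, trace_sub, trace_smul, RCLike.smul_re] using this

namespace IsHermitian

variable {A : Matrix n n 𝕜} (hA : A.IsHermitian)
include hA

theorem eigenvalues_eq_of_eq_smul_one {c : ℝ} (h : A = c • 1) (i : n) : hA.eigenvalues i = c := by
  have : Nonempty n := ⟨i⟩
  have hspec : spectrum ℝ A = {c} := by
    rw [h, ← Algebra.algebraMap_eq_smul_one, spectrum.scalar_eq]
  simpa [hspec] using hA.eigenvalues_mem_spectrum_real i

theorem eigenvalues_sq_eq_of_mul_self_eq {c : ℝ} (h : A * A = c • 1) (i : n) :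
    hA.eigenvalues i ^ 2 = c := by
  have : Nonempty n := ⟨i⟩
  have := spectrum.pow_mem_pow A 2 (hA.eigenvalues_mem_spectrum_real i)
  rwa [sq, h, ← Algebra.algebraMap_eq_smul_one, spectrum.scalar_eq] at this

theorem posSemidef_smul_one_sub_of_eigenvalues_le {r : ℝ} (h : ∀ i, hA.eigenvalues i ≤ r) :
    (r • 1 - A).PosSemidef := by
  open scoped MatrixOrder in
  have := le_algebraMap_of_spectrum_le (R := ℝ) (r := r) ?_ hA.isSelfAdjoint
  · simpa [Matrix.le_iff, Algebra.algebraMap_eq_smul_one] using this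
  · rintro x hx
    obtain ⟨i, rfl⟩ := hA.spectrum_real_eq_range_eigenvalues ▸ hx
    exact h i

theorem posSemidef_sqrt_smul_one_sub_of_mul_self_eq {c : ℝ} (h : A * A = c • 1) :
    (√c • 1 - A).PosSemidef :=
  hA.posSemidef_smul_one_sub_of_eigenvalues_le fun i ↦ by
    rw [← hA.eigenvalues_sq_eq_of_mul_self_eq h i, Real.sqrt_sq_eq_abs]
    exact le_abs_self _

end IsHermitian

theorem mul_self_eq_neg_det_smul_one_of_trace_eq_zero {R : Type*} [CommRing R]
    {A : Matrix (Fin 2) (Fin 2) R} (h : A.trace = 0) : A * A = -A.det • 1 := by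
  have h11 : A 1 1 = -A 0 0 := by linear_combination (trace_fin_two A).symm.trans h
  ext i j
  fin_cases i <;> fin_cases j <;> simp [mul_apply, det_fin_two, h11] <;> ring

theorem IsHermitian.mul_self_eq_of_trace_eq_zero {A : Matrix (Fin 2) (Fin 2) ℂ}
    (hA : A.IsHermitian) (h : A.trace = 0) : A * A = (-A.det.re) • 1 := by
  have hdet : ((A.det.re : ℝ) : ℂ) = A.det :=
    Complex.conj_eq_iff_re.mp (by rw [← Complex.star_def, ← det_conjTranspose, hA.eq])
  rw [mul_self_eq_neg_det_smul_one_of_trace_eq_zero h, ← Complex.coe_smul, Complex.ofReal_neg, hdet]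

end Matrix

theorem traceNorm_eq_of_mul_self_eq {A : Matrix (Fin 2) (Fin 2) ℂ} (hA : A.IsHermitian) {c : ℝ}
    (h : A * A = c • 1) : traceNorm A = 2 * √c := by
  have hAA : Aᴴ * A = c • 1 := by rw [hA.eq, h]
  simp [traceNorm, (isHermitian_conjTranspose_mul_self A).eigenvalues_eq_of_eq_smul_one hAA]

theorem re_trace_mul_sub_le_traceNorm {ρ σ M : Matrix (Fin 2) (Fin 2) ℂ} (hρ : ρ.IsHermitian)
    (hσ : σ.IsHermitian) (htr : ρ.trace = σ.trace) (hM : M.PosSemidef) :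
    (M * (ρ - σ)).trace.re ≤ traceNorm (ρ - σ) / 2 * M.trace.re := by
  have hΔ : (ρ - σ).IsHermitian := hρ.sub hσ
  have hsq := hΔ.mul_self_eq_of_trace_eq_zero (by rw [trace_sub, htr, sub_self])
  rw [traceNorm_eq_of_mul_self_eq hΔ hsq, mul_div_cancel_left₀ _ two_ne_zero]
  exact hM.re_trace_mul_le_of_posSemidef_smul_one_sub
    (hΔ.posSemidef_sqrt_smul_one_sub_of_mul_self_eq hsq)

theorem re_trace_mul_depolarize (p : ℝ) (M τ : Matrix (Fin 2) (Fin 2) ℂ) :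
    (M * depolarize p τ).trace.re = p / 2 * M.trace.re + (1 - p) * (M * τ).trace.re := by
  simp [depolarize, Matrix.mul_add, trace_add, trace_smul]

theorem mix_le_one_add_mul_mix {p d T a b : ℝ} (hp0 : 0 < p) (hp1 : p ≤ 1) (hd : 0 ≤ d)
    (hb : 0 ≤ b) (hab : a ≤ b + d * T) :
    p / 2 * T + (1 - p) * a ≤ (1 + (1 - p) / p * (2 * d)) * (p / 2 * T + (1 - p) * b) := by
  have hexpand : (1 + (1 - p) / p * (2 * d)) * (p / 2 * T + (1 - p) * b) =
      p / 2 * T + (1 - p) * (b + d * T) + 2 * d * (1 - p) ^ 2 / p * b := by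
    field_simp
    ring
  have hslack : 0 ≤ 2 * d * (1 - p) ^ 2 / p * b := by positivity
  rw [hexpand]
  linarith [mul_le_mul_of_nonneg_left hab (sub_nonneg.mpr hp1)]

theorem depolarize_qdp_measurement_bound_general (p d : ℝ) (hp0 : 0 < p) (hp1 : p ≤ 1)
    (hd0 : 0 < d)
    (ρ σ : Matrix (Fin 2) (Fin 2) ℂ)
    (hρ : ρ.PosSemidef) (hρtr : ρ.trace = 1)
    (hσ : σ.PosSemidef) (hσtr : σ.trace = 1)
    (hclose : traceNorm (ρ - σ) / 2 ≤ d)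
    (M : Matrix (Fin 2) (Fin 2) ℂ) (hM : M.PosSemidef) :
    (M * depolarize p ρ).trace.re ≤ (1 + (1 - p) / p * (2 * d)) * (M * depolarize p σ).trace.re := by
  have hmeas :=
    re_trace_mul_sub_le_traceNorm hρ.isHermitian hσ.isHermitian (hρtr.trans hσtr.symm) hM
  rw [Matrix.mul_sub, trace_sub, Complex.sub_re] at hmeas
  have hM_tr : 0 ≤ M.trace.re := (RCLike.nonneg_iff.mp hM.trace_nonneg).1
  have hMσ : 0 ≤ (M * σ).trace.re := (RCLike.nonneg_iff.mp (hM.trace_mul_nonneg hσ)).1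
  rw [re_trace_mul_depolarize, re_trace_mul_depolarize]
  refine mix_le_one_add_mul_mix hp0 hp1 hd0.le hMσ ?_
  linarith [mul_le_mul_of_nonneg_right hclose hM_tr]

theorem depolarize_qdp_measurement_bound (p d : ℝ) (hp0 : 0 < p) (hp1 : p ≤ 1)
    (hd0 : 0 < d) (hd1 : d ≤ 1)
    (ρ σ : Matrix (Fin 2) (Fin 2) ℂ)
    (hρ : ρ.PosSemidef) (hρtr : ρ.trace = 1)
    (hσ : σ.PosSemidef) (hσtr : σ.trace = 1)
    (hclose : traceNorm (ρ - σ) / 2 ≤ d)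
    (M : Matrix (Fin 2) (Fin 2) ℂ) (hM : M.PosSemidef) (hMI : ((1 : Matrix (Fin 2) (Fin 2) ℂ) - M).PosSemidef) :
    (M * depolarize p ρ).trace.re ≤ (1 + (1 - p) / p * (2 * d)) * (M * depolarize p σ).trace.re :=
  depolarize_qdp_measurement_bound_general p d hp0 hp1 hd0 ρ σ hρ hρtr hσ hσtr hclose M hM
end

section
/- Fidelity under generalized amplitude damping (p = 1/2) is decreasing in the damping strength: for a qubit state with Bloch vector r = (x, 0, z), the noisy state has Bloch vector s(γ) = (x√(1−γ), 0, z(1−γ)), and the Bloch-formula fidelity F(γ) = (1 + x²√(1−γ) + z²(1−γ) + √((1−x²−z²)(1−x²(1−γ)−z²(1−γ)²)))/2 is monotone nonincreasing in γ on [0,1], with F(0) = 1. -/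
open Real

lemma fidelity_gad_key (x z u v : ℝ) (hxz : x ^ 2 + z ^ 2 ≤ 1)
    (hv : 0 ≤ v) (hvu : v ≤ u) (hu : u ≤ 1) :
    x ^ 2 * Real.sqrt v + z ^ 2 * v +
      Real.sqrt ((1 - x ^ 2 - z ^ 2) * (1 - x ^ 2 * v - z ^ 2 * v ^ 2)) ≤
    x ^ 2 * Real.sqrt u + z ^ 2 * u +
      Real.sqrt ((1 - x ^ 2 - z ^ 2) * (1 - x ^ 2 * u - z ^ 2 * u ^ 2)) := by
  have hu0 : 0 ≤ u := le_trans hv hvu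
  have hs2 : 0 ≤ 1 - x ^ 2 - z ^ 2 := by linarith
  have hv1 : v ≤ 1 := le_trans hvu hu
  have hQu_ge : 1 - x ^ 2 - z ^ 2 ≤ 1 - x ^ 2 * u - z ^ 2 * u ^ 2 := by
    nlinarith [mul_nonneg (sq_nonneg x) (by linarith : (0:ℝ) ≤ 1 - u),
      mul_nonneg (sq_nonneg z) (mul_nonneg (by linarith : (0:ℝ) ≤ 1 - u) (by linarith : (0:ℝ) ≤ 1 + u))]
  have hQv_ge : 1 - x ^ 2 - z ^ 2 ≤ 1 - x ^ 2 * v - z ^ 2 * v ^ 2 := by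
    nlinarith [mul_nonneg (sq_nonneg x) (by linarith : (0:ℝ) ≤ 1 - v),
      mul_nonneg (sq_nonneg z) (mul_nonneg (by linarith : (0:ℝ) ≤ 1 - v) (by linarith : (0:ℝ) ≤ 1 + v))]
  have hQu0 : 0 ≤ 1 - x ^ 2 * u - z ^ 2 * u ^ 2 := le_trans hs2 hQu_ge
  have hQv0 : 0 ≤ 1 - x ^ 2 * v - z ^ 2 * v ^ 2 := le_trans hs2 hQv_ge
  have hQuv : 1 - x ^ 2 * u - z ^ 2 * u ^ 2 ≤ 1 - x ^ 2 * v - z ^ 2 * v ^ 2 := by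
    nlinarith [mul_nonneg (sq_nonneg x) (by linarith : (0:ℝ) ≤ u - v),
      mul_nonneg (sq_nonneg z) (mul_nonneg (by linarith : (0:ℝ) ≤ u - v) (by linarith : (0:ℝ) ≤ u + v))]
  rw [Real.sqrt_mul hs2, Real.sqrt_mul hs2]
  set S := Real.sqrt (1 - x ^ 2 - z ^ 2) with hSdef
  set P := Real.sqrt (1 - x ^ 2 * u - z ^ 2 * u ^ 2) with hPdef
  set Q := Real.sqrt (1 - x ^ 2 * v - z ^ 2 * v ^ 2) with hQdef
  set A := Real.sqrt u with hAdef
  set B := Real.sqrt v with hBdef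
  have hS : S ^ 2 = 1 - x ^ 2 - z ^ 2 := Real.sq_sqrt hs2
  have hP : P ^ 2 = 1 - x ^ 2 * u - z ^ 2 * u ^ 2 := Real.sq_sqrt hQu0
  have hQ : Q ^ 2 = 1 - x ^ 2 * v - z ^ 2 * v ^ 2 := Real.sq_sqrt hQv0
  have hA : A ^ 2 = u := Real.sq_sqrt hu0
  have hB : B ^ 2 = v := Real.sq_sqrt hv
  have hSP : S ≤ P := Real.sqrt_le_sqrt hQu_ge
  have hSQ : S ≤ Q := Real.sqrt_le_sqrt hQv_ge
  have hPQ : P ≤ Q := Real.sqrt_le_sqrt hQuv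
  have hBA : B ≤ A := Real.sqrt_le_sqrt hvu
  have hA1 : A ≤ 1 := by
    rw [hAdef, show (1:ℝ) = Real.sqrt 1 by rw [Real.sqrt_one]]
    exact Real.sqrt_le_sqrt hu
  have hB0 : 0 ≤ B := Real.sqrt_nonneg _
  have hS0 : 0 ≤ S := Real.sqrt_nonneg _
  have hP0 : 0 ≤ P := Real.sqrt_nonneg _
  -- key product facts
  have key1 : 0 ≤ (Q - P) * (Q + P - 2 * S) :=
    mul_nonneg (by linarith) (by linarith)
  have e1 : (Q - P) * (Q + P - 2 * S) =
      (1 - x ^ 2 * v - z ^ 2 * v ^ 2) - (1 - x ^ 2 * u - z ^ 2 * u ^ 2)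
        - 2 * S * Q + 2 * S * P := by
    linear_combination hQ - hP
  have step1 : 2 * S * Q - 2 * S * P ≤
      x ^ 2 * u + z ^ 2 * u ^ 2 - x ^ 2 * v - z ^ 2 * v ^ 2 := by
    rw [e1] at key1; linarith
  have key2 : 0 ≤ x ^ 2 * ((A - B) * (2 - (A + B))) :=
    mul_nonneg (sq_nonneg x) (mul_nonneg (by linarith) (by linarith [hB0, hBA, hA1]))
  have e2 : x ^ 2 * ((A - B) * (2 - (A + B))) =
      2 * (x ^ 2 * A - x ^ 2 * B) - x ^ 2 * (u - v) := by
    rw [← hA, ← hB]; ring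
  have key3 : 0 ≤ z ^ 2 * ((u - v) * (2 - (u + v))) :=
    mul_nonneg (sq_nonneg z) (mul_nonneg (by linarith) (by linarith))
  have e3 : z ^ 2 * ((u - v) * (2 - (u + v))) =
      2 * (z ^ 2 * u - z ^ 2 * v) - z ^ 2 * (u ^ 2 - v ^ 2) := by ring
  rw [e2] at key2
  rw [e3] at key3
  linarith

theorem fidelity_gad_antitone (x z : ℝ) (hxz : x ^ 2 + z ^ 2 ≤ 1) :
    AntitoneOn
      (fun γ : ℝ =>
        (1 + x ^ 2 * Real.sqrt (1 - γ) + z ^ 2 * (1 - γ) +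
          Real.sqrt ((1 - x ^ 2 - z ^ 2) *
            (1 - x ^ 2 * (1 - γ) - z ^ 2 * (1 - γ) ^ 2))) / 2)
      (Set.Icc (0 : ℝ) 1) ∧
    (1 + x ^ 2 * Real.sqrt (1 - 0) + z ^ 2 * (1 - 0) +
      Real.sqrt ((1 - x ^ 2 - z ^ 2) *
        (1 - x ^ 2 * (1 - 0) - z ^ 2 * (1 - 0) ^ 2))) / 2 = 1 := by
  constructor
  · intro a ha b hb hab
    simp only
    have := fidelity_gad_key x z (1 - a) (1 - b) hxz
      (by linarith [hb.2]) (by linarith) (by linarith [ha.1])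
    linarith
  · have hs2 : 0 ≤ 1 - x ^ 2 - z ^ 2 := by linarith
    have h1 : 1 - x ^ 2 * (1 - 0) - z ^ 2 * (1 - 0) ^ 2 = 1 - x ^ 2 - z ^ 2 := by ring
    rw [h1, Real.sqrt_mul_self hs2]
    norm_num
end

section
/- Adaptive (associated) composition of RDP mechanisms: let M₁ : D → Dist(R₁) be (α,ε₁)-RDP and M₂ : R₁ × D → Dist(R₂) be such that for every fixed x ∈ R₁, M₂(x,·) is (α,ε₂)-RDP. Then the joint mechanism D ↦ (X,Y) with X ∼ M₁(D) and Y ∼ M₂(X,D) is (α, ε₁+ε₂)-RDP: for neighboring D, D', D_α( Law(X,Y | D) ‖ Law(X,Y | D') ) ≤ ε₁ + ε₂. -/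
open Real Finset

theorem adaptive_composition_rdp {Data R₁ R₂ : Type*} [Fintype R₁] [Fintype R₂]
    (α ε₁ ε₂ : ℝ) (hα : 1 < α)
    (Neighbor : Data → Data → Prop) (hsymm : ∀ D D', Neighbor D D' → Neighbor D' D)
    (M₁ : Data → R₁ → ℝ) (M₂ : R₁ → Data → R₂ → ℝ)
    (hM₁0 : ∀ D x, 0 < M₁ D x) (hM₁1 : ∀ D, ∑ x, M₁ D x = 1)
    (hM₂0 : ∀ x D y, 0 < M₂ x D y) (hM₂1 : ∀ x D, ∑ y, M₂ x D y = 1)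
    (hRDP₁ : ∀ D D', Neighbor D D' → renyiDiv α (M₁ D) (M₁ D') ≤ ε₁)
    (hRDP₂ : ∀ x D D', Neighbor D D' → renyiDiv α (M₂ x D) (M₂ x D') ≤ ε₂) :
    ∀ D D', Neighbor D D' →
      renyiDiv α (fun z : R₁ × R₂ => M₁ D z.1 * M₂ z.1 D z.2)
        (fun z : R₁ × R₂ => M₁ D' z.1 * M₂ z.1 D' z.2) ≤ ε₁ + ε₂ := by
  intro D D' hN
  have hα1 : (0:ℝ) < α - 1 := by linarith
  -- nonemptiness
  have hne₁ : Nonempty R₁ := by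
    by_contra h
    have : (∑ x, M₁ D x) = 0 := by
      rw [Finset.sum_eq_zero]
      intro x _
      exact absurd ⟨x⟩ h
    rw [hM₁1 D] at this; norm_num at this
  have hne₂ : Nonempty R₂ := by
    obtain ⟨x⟩ := hne₁
    by_contra h
    have : (∑ y, M₂ x D y) = 0 := by
      rw [Finset.sum_eq_zero]
      intro y _
      exact absurd ⟨y⟩ h
    rw [hM₂1 x D] at this; norm_num at this
  set S₁ : ℝ := ∑ x, M₁ D x ^ α * M₁ D' x ^ (1 - α) with hS₁def
  set S₂ : R₁ → ℝ := fun x => ∑ y, M₂ x D y ^ α * M₂ x D' y ^ (1 - α) with hS₂def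
  have hS₁pos : 0 < S₁ := by
    apply Finset.sum_pos
    · intro x _
      exact mul_pos (Real.rpow_pos_of_pos (hM₁0 D x) _) (Real.rpow_pos_of_pos (hM₁0 D' x) _)
    · exact Finset.univ_nonempty
  have hS₂pos : ∀ x, 0 < S₂ x := by
    intro x
    apply Finset.sum_pos
    · intro y _
      exact mul_pos (Real.rpow_pos_of_pos (hM₂0 x D y) _) (Real.rpow_pos_of_pos (hM₂0 x D' y) _)
    · exact Finset.univ_nonempty
  have hS₁le : S₁ ≤ Real.exp ((α - 1) * ε₁) := by
    have h := hRDP₁ D D' hN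
    rw [renyiDiv] at h
    have hlog : Real.log S₁ ≤ (α - 1) * ε₁ := by
      rw [inv_mul_le_iff₀ hα1] at h
      linarith [h]
    calc S₁ = Real.exp (Real.log S₁) := (Real.exp_log hS₁pos).symm
      _ ≤ Real.exp ((α - 1) * ε₁) := Real.exp_le_exp.mpr hlog
  have hS₂le : ∀ x, S₂ x ≤ Real.exp ((α - 1) * ε₂) := by
    intro x
    have h := hRDP₂ x D D' hN
    rw [renyiDiv] at h
    have hlog : Real.log (S₂ x) ≤ (α - 1) * ε₂ := by
      rw [inv_mul_le_iff₀ hα1] at h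
      linarith [h]
    calc S₂ x = Real.exp (Real.log (S₂ x)) := (Real.exp_log (hS₂pos x)).symm
      _ ≤ Real.exp ((α - 1) * ε₂) := Real.exp_le_exp.mpr hlog
  set T : ℝ := ∑ z : R₁ × R₂, (M₁ D z.1 * M₂ z.1 D z.2) ^ α *
      (M₁ D' z.1 * M₂ z.1 D' z.2) ^ (1 - α) with hTdef
  have hTeq : T = ∑ x, (M₁ D x ^ α * M₁ D' x ^ (1 - α)) * S₂ x := by
    rw [hTdef, Fintype.sum_prod_type]
    apply Finset.sum_congr rfl
    intro x _
    rw [hS₂def, Finset.mul_sum]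
    apply Finset.sum_congr rfl
    intro y _
    rw [Real.mul_rpow (hM₁0 D x).le (hM₂0 x D y).le,
        Real.mul_rpow (hM₁0 D' x).le (hM₂0 x D' y).le]
    ring
  have hTpos : 0 < T := by
    rw [hTeq]
    apply Finset.sum_pos
    · intro x _
      exact mul_pos (mul_pos (Real.rpow_pos_of_pos (hM₁0 D x) _)
        (Real.rpow_pos_of_pos (hM₁0 D' x) _)) (hS₂pos x)
    · exact Finset.univ_nonempty
  have hTle : T ≤ Real.exp ((α - 1) * ε₁) * Real.exp ((α - 1) * ε₂) := by
    rw [hTeq]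
    calc (∑ x, (M₁ D x ^ α * M₁ D' x ^ (1 - α)) * S₂ x)
        ≤ ∑ x, (M₁ D x ^ α * M₁ D' x ^ (1 - α)) * Real.exp ((α - 1) * ε₂) := by
          apply Finset.sum_le_sum
          intro x _
          exact mul_le_mul_of_nonneg_left (hS₂le x)
            (mul_pos (Real.rpow_pos_of_pos (hM₁0 D x) _)
              (Real.rpow_pos_of_pos (hM₁0 D' x) _)).le
      _ = S₁ * Real.exp ((α - 1) * ε₂) := by rw [hS₁def, Finset.sum_mul]
      _ ≤ Real.exp ((α - 1) * ε₁) * Real.exp ((α - 1) * ε₂) :=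
          mul_le_mul_of_nonneg_right hS₁le (Real.exp_pos _).le
  rw [renyiDiv]
  have hlogT : Real.log T ≤ (α - 1) * (ε₁ + ε₂) := by
    calc Real.log T ≤ Real.log (Real.exp ((α - 1) * ε₁) * Real.exp ((α - 1) * ε₂)) :=
          Real.log_le_log hTpos hTle
      _ = (α - 1) * (ε₁ + ε₂) := by
          rw [← Real.exp_add, Real.log_exp]; ring
  calc (α - 1)⁻¹ * Real.log T ≤ (α - 1)⁻¹ * ((α - 1) * (ε₁ + ε₂)) := by
        exact mul_le_mul_of_nonneg_left hlogT (inv_pos.mpr hα1).le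
    _ = ε₁ + ε₂ := by field_simp
end
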